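/- arXiv:1807.08755 — 2 statements merged into one kernel-verified Lean document; each statement's English description precedes it below -/
import Mathlib

section
/- Let K be a field, let d ≥ 1, and let z₁, …, z_d be pairwise distinct elements of K. Then for every integer n ≥ 1, Σ_{ℓ=1}^{d} z_ℓⁿ · Π_{m≠ℓ} z_m/(z_m − z_ℓ) = (−1)^{d+1} · h_{n−d}(z₁, …, z_d) · z₁z₂⋯z_d. (This identity is the algebraic content of the paper's pushforward Lemma f_*Eⁿ = (−1)^{d+1} h_{n−d}(Z₁,…,Z_d) Z₁⋯Z_d for the blowup along a transverse complete intersection of d divisors, combined with the pushforward Theorem f_*Q(E) = Σ_ℓ Q(Z_ℓ) Π_{m≠ℓ} Z_m/(Z_m − Z_ℓ).) -/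
/-!
With the Lagrange nodal weights `w_ℓ = ∏_{m ≠ ℓ} (z_ℓ - z_m)⁻¹`, the `ℓ`-th summand is
`(-1)^(d-1) z₁⋯z_d · z_ℓ^(n-1) w_ℓ`, so it suffices to show `∑_ℓ z_ℓ^k w_ℓ = h_{k+1-d}(z)`.
Reflecting the Lagrange identity `∑_ℓ w_ℓ ∏_{m ≠ ℓ} (X - z_m) = 1` in degree `d - 1` gives
`∑_ℓ w_ℓ ∏_{m ≠ ℓ} (1 - z_m X) = X^(d-1)`, i.e. the partial fraction decomposition
`∑_ℓ w_ℓ / (1 - z_ℓ X) = X^(d-1) / ∏_m (1 - z_m X)`. Expanding both sides as geometric series and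
comparing coefficients of `X^k` gives the claim, because `1 / ∏_m (1 - z_m X) = ∑_j h_j(z) X^j`.
-/

open Finset Polynomial Lagrange

namespace PowerSeries

theorem one_sub_C_mul_X_mul_mk_pow {R : Type*} [CommRing R] (a : R) :
    (1 - C a * X) * mk (a ^ ·) = 1 := by
  simpa [rescale_mk, rescale_X, mul_comm] using
    congrArg (rescale a) (mk_one_mul_one_sub_eq_one (S := R))

theorem coeff_prod_mk_pow {R : Type*} [CommSemiring R] {d : ℕ} (z : Fin d → R) (n : ℕ) :
    coeff n (∏ i, mk (z i ^ ·)) = ∑ x ∈ Nat.antidiagonalTuple d n, ∏ i, z i ^ x i := by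
  rw [coeff_prod, ← piAntidiag_univ_fin_eq_antidiagonalTuple, finsuppAntidiag, sum_map]
  simp only [coeff_mk]
  exact sum_attach _ fun x : Fin d → ℕ => ∏ i, z i ^ x i

end PowerSeries

namespace Polynomial

theorem reflect_sum {R ι : Type*} [Semiring R] (N : ℕ) (s : Finset ι) (f : ι → R[X]) :
    reflect N (∑ i ∈ s, f i) = ∑ i ∈ s, reflect N (f i) :=
  map_sum ({ toFun := reflect N, map_zero' := reflect_zero, map_add' := (reflect_add · · N) } :
    R[X] →+ R[X]) f s

end Polynomial

namespace Lagrange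

theorem reflect_nodal {R ι : Type*} [CommRing R] [Nontrivial R] (s : Finset ι) (v : ι → R) :
    (nodal s v).reflect #s = ∏ i ∈ s, (1 - C (v i) * X) := by
  classical
  induction s using Finset.induction_on with
  | empty => simp [nodal_empty, reflect_one]
  | insert a s ha ih =>
    rw [nodal_insert_eq_nodal ha, card_insert_of_notMem ha, add_comm,
      reflect_mul _ _ (natDegree_X_sub_C_le (v a)) natDegree_nodal.le, ih, prod_insert ha,
      reflect_sub, reflect_one_X, reflect_C, pow_one]

variable {F ι : Type*} [Field F] [DecidableEq ι] {s : Finset ι} {v : ι → F}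

theorem sum_C_nodalWeight_mul_prod_one_sub (hvs : Set.InjOn v s) (hs : s.Nonempty) :
    ∑ i ∈ s, C (nodalWeight s v i) * ∏ j ∈ s.erase i, (1 - C (v j) * X) = X ^ (#s - 1) := by
  have h := congrArg (reflect (#s - 1)) (sum_basis hvs hs)
  rw [reflect_sum, reflect_one] at h
  rw [← h]
  refine sum_congr rfl fun i hi => ?_
  rw [basis_eq_prod_sub_inv_mul_nodal_div hi, ← nodal_erase_eq_nodal_div hi, reflect_C_mul,
    ← card_erase_of_mem hi, reflect_nodal]

theorem sum_pow_mul_nodalWeight (hvs : Set.InjOn v s) (hs : s.Nonempty) (k : ℕ) :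
    ∑ i ∈ s, v i ^ k * nodalWeight s v i =
      if #s ≤ k + 1 then PowerSeries.coeff (k + 1 - #s) (∏ i ∈ s, PowerSeries.mk (v i ^ ·))
      else 0 := by
  have hgeom (t : Finset ι) : (∏ j ∈ t, (1 - PowerSeries.C (v j) * PowerSeries.X)) *
      ∏ j ∈ t, PowerSeries.mk (v j ^ ·) = 1 := by
    rw [← prod_mul_distrib]
    exact prod_eq_one fun j _ => PowerSeries.one_sub_C_mul_X_mul_mk_pow (v j)
  have hpartialFraction : ∑ i ∈ s, PowerSeries.C (nodalWeight s v i) * PowerSeries.mk (v i ^ ·) =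
      PowerSeries.X ^ (#s - 1) * ∏ i ∈ s, PowerSeries.mk (v i ^ ·) := by
    have h := congrArg (coeToPowerSeries.ringHom (R := F))
      (sum_C_nodalWeight_mul_prod_one_sub hvs hs)
    simp only [map_sum, map_mul, map_prod, map_sub, map_one, map_pow,
      coeToPowerSeries.ringHom_apply, coe_C, coe_X] at h
    rw [← h, sum_mul]
    refine sum_congr rfl fun i hi => ?_
    rw [← mul_prod_erase s _ hi, mul_mul_mul_comm, hgeom, mul_one]
  have h := congrArg (PowerSeries.coeff k) hpartialFraction
  simp only [map_sum, PowerSeries.coeff_C_mul, PowerSeries.coeff_X_pow_mul',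
    PowerSeries.coeff_mk] at h
  have hcard := hs.card_pos
  simp_rw [mul_comm (v _ ^ k), h, show #s - 1 ≤ k ↔ #s ≤ k + 1 by omega,
    show k - (#s - 1) = k + 1 - #s by omega]

theorem pow_succ_mul_prod_div_sub {ℓ : ι} (hℓ : ℓ ∈ s) (k : ℕ) :
    v ℓ ^ (k + 1) * ∏ m ∈ s.erase ℓ, v m / (v m - v ℓ) =
      (-1) ^ (#s - 1) * (∏ m ∈ s, v m) * (v ℓ ^ k * nodalWeight s v ℓ) := by
  have hfactor (m : ι) : v m / (v m - v ℓ) = -1 * v m * (v ℓ - v m)⁻¹ := by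
    rw [← neg_sub, div_neg, div_eq_mul_inv]; ring
  rw [prod_congr rfl fun m _ => hfactor m, prod_mul_distrib, prod_mul_distrib, prod_const,
    card_erase_of_mem hℓ, ← mul_prod_erase s v hℓ, nodalWeight]
  ring

end Lagrange

/-- Pushforward of powers of the exceptional divisor: for pairwise distinct
`z₁, …, z_d` in a field `K` (`d ≥ 1`) and any `n ≥ 1`,
`Σ_ℓ z_ℓⁿ · Π_{m ≠ ℓ} z_m/(z_m − z_ℓ) = (−1)^{d+1} · h_{n−d}(z₁, …, z_d) · z₁⋯z_d`,
where `h_j` is the complete homogeneous symmetric polynomial of degree `j`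
(with `h_j = 0` for `j < 0` and `h₀ = 1`). -/
theorem pushforward_exceptional_powers {K : Type*} [Field K] {d : ℕ} (hd : 1 ≤ d)
    (z : Fin d → K) (hz : Function.Injective z) (n : ℕ) (hn : 1 ≤ n) :
    ∑ ℓ : Fin d, z ℓ ^ n * ∏ m ∈ Finset.univ.erase ℓ, z m / (z m - z ℓ) =
      (-1 : K) ^ (d + 1) *
        (if d ≤ n then
            ∑ x ∈ Finset.Nat.antidiagonalTuple d (n - d), ∏ i : Fin d, z i ^ x i
          else 0) *
        ∏ m : Fin d, z m := by
  obtain ⟨k, rfl⟩ : ∃ k, n = k + 1 := ⟨n - 1, by omega⟩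
  have hne : (univ : Finset (Fin d)).Nonempty := univ_nonempty_iff.mpr ⟨⟨0, hd⟩⟩
  have hsign : (-1 : K) ^ (d + 1) = (-1) ^ (d - 1) := by
    rw [show d + 1 = d - 1 + 2 by omega, pow_add, neg_one_sq, mul_one]
  rw [sum_congr rfl fun ℓ _ => pow_succ_mul_prod_div_sub (mem_univ ℓ) k, ← mul_sum,
    sum_pow_mul_nodalWeight hz.injOn hne, card_univ, Fintype.card_fin,
    PowerSeries.coeff_prod_mk_pow, hsign]
  ring
end

section
/- Let R = ℚ[L, c₁, c₂, c₃] and let ν : R[H] → R be the R-linear map determined by ν(1) = ν(H) = 0 and ν(H^k) = ((−2)^{k−1} − (−3)^{k−1})·L^{k−2} for k ≥ 2. With y₁ = c₁ − L; y₂ = 3H² + 13HL + 12L² − c₁L + c₂; y₃ = −8H³ + (3c₁ − 52L)H² + (13c₁L − 108L²)H + 12c₁L² − c₂L + c₃ − 72L³; and y₄ = 24H⁴ + (204L − 8c₁)H³ + (−52c₁L + 3c₂ + 636L²)H² + (−108c₁L² + 13c₂L + 864L³)H − 72c₁L³ + 12c₂L² − c₃L + 432L⁴, the following identities hold in R: ν(y₁⁴·(3H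 + 6L)) = 0; ν(y₁²y₂·(3H + 6L)) = 12L(c₁ − L)²; ν(y₂²·(3H + 6L)) = 24L(6L² − c₁L + c₂); ν(y₁y₃·(3H + 6L)) = 12L(c₁ − 6L)(c₁ − L); ν(y₄·(3H + 6L)) = 12L(36L² − 6Lc₁ + c₂). (This is the computational content of the paper's Theorem on the Chern numbers of a smooth Weierstrass fourfold: ∫c₁⁴ = 0, ∫c₁²c₂ = 12∫_B L(c₁−L)², ∫c₂² = 24∫_B L(6L²−c₁L+c₂), ∫c₁c₃ = 12∫_B L(c₁−6L)(c₁−L), ∫c₄ = 12∫_B L(36L²−6Lc₁+c₂).) -/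
open Polynomial

namespace SmoothWeierstrassChernNumbers

/-- The ring `R = ℚ[L, c₁, c₂, c₃]`: variables `0 ↦ L`, `1 ↦ c₁`, `2 ↦ c₂`, `3 ↦ c₃`. -/
noncomputable abbrev R : Type := MvPolynomial (Fin 4) ℚ

noncomputable def L : R := MvPolynomial.X 0
noncomputable def c₁ : R := MvPolynomial.X 1
noncomputable def c₂ : R := MvPolynomial.X 2
noncomputable def c₃ : R := MvPolynomial.X 3

/-- The `R`-linear pushforward `ν : R[H] → R` determined by `ν(1) = ν(H) = 0` and
`ν(H^k) = ((−2)^{k−1} − (−3)^{k−1})·L^{k−2}` for `k ≥ 2`. -/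
noncomputable def ν (p : Polynomial R) : R :=
  p.sum fun k a =>
    a * if k ≤ 1 then 0 else ((-2 : R) ^ (k - 1) - (-3 : R) ^ (k - 1)) * L ^ (k - 2)

/-- `H` as an element of `R[H]`. -/
noncomputable def H : Polynomial R := X

noncomputable def y₁ : Polynomial R := C (c₁ - L)
noncomputable def y₂ : Polynomial R :=
  3 * H ^ 2 + 13 * H * C L + C (12 * L ^ 2 - c₁ * L + c₂)
noncomputable def y₃ : Polynomial R :=
  -8 * H ^ 3 + C (3 * c₁ - 52 * L) * H ^ 2 + C (13 * c₁ * L - 108 * L ^ 2) * H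
    + C (12 * c₁ * L ^ 2 - c₂ * L + c₃ - 72 * L ^ 3)
noncomputable def y₄ : Polynomial R :=
  24 * H ^ 4 + C (204 * L - 8 * c₁) * H ^ 3 + C (-52 * c₁ * L + 3 * c₂ + 636 * L ^ 2) * H ^ 2
    + C (-108 * c₁ * L ^ 2 + 13 * c₂ * L + 864 * L ^ 3) * H
    + C (-72 * c₁ * L ^ 3 + 12 * c₂ * L ^ 2 - c₃ * L + 432 * L ^ 4)

/-! `ν` is the pushforward along `ℙ(O ⊕ L² ⊕ L³) → B`, so the residue formula at the Chern
roots `0, −2L, −3L` computes it: `ν p = p(0)/(6L²) − p(−2L)/(2L²) + p(−3L)/(3L²)`. After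
clearing the denominator `6L²`, each Chern number becomes a polynomial identity in
`L, c₁, c₂, c₃` between three evaluations of the integrand. -/

lemma ν_add (p q : Polynomial R) : ν (p + q) = ν p + ν q :=
  sum_add_index _ _ _ (fun _ => zero_mul _) fun _ _ _ => add_mul _ _ _

lemma ν_monomial (k : ℕ) (a : R) :
    ν (monomial k a)
      = a * if k ≤ 1 then 0 else ((-2 : R) ^ (k - 1) - (-3 : R) ^ (k - 1)) * L ^ (k - 2) :=
  sum_monomial_index _ _ (zero_mul _)

theorem six_mul_L_sq_mul_ν (p : Polynomial R) :
    6 * L ^ 2 * ν p = 2 * p.eval (-3 * L) - 3 * p.eval (-2 * L) + p.eval 0 := by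
  induction p using Polynomial.induction_on' with
  | add p q hp hq => simp only [ν_add, eval_add]; linear_combination hp + hq
  | monomial k a =>
    simp only [ν_monomial, eval_monomial]
    match k with
    | 0 | 1 => rw [if_pos (by omega)]; ring
    | j + 2 =>
      rw [if_neg (by omega), show j + 2 - 1 = j + 1 by omega, Nat.add_sub_cancel,
        zero_pow (by omega)]
      ring

lemma L_ne_zero : L ≠ 0 := MvPolynomial.X_ne_zero 0

lemma ν_eq_of_eval {p : Polynomial R} {r : R}
    (h : 2 * p.eval (-3 * L) - 3 * p.eval (-2 * L) + p.eval 0 = 6 * L ^ 2 * r) : ν p = r :=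
  mul_left_cancel₀ (by simp [L_ne_zero]) ((six_mul_L_sq_mul_ν p).trans h)

/-- Chern numbers of a smooth Weierstrass elliptic fourfold, via pushforward:
`∫c₁⁴ = 0`, `∫c₁²c₂ = 12L(c₁ − L)²`, `∫c₂² = 24L(6L² − c₁L + c₂)`,
`∫c₁c₃ = 12L(c₁ − 6L)(c₁ − L)`, `∫c₄ = 12L(36L² − 6Lc₁ + c₂)`. -/
theorem chern_numbers_smooth_weierstrass :
    ν (y₁ ^ 4 * (3 * H + 6 * C L)) = 0 ∧
    ν (y₁ ^ 2 * y₂ * (3 * H + 6 * C L)) = 12 * L * (c₁ - L) ^ 2 ∧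
    ν (y₂ ^ 2 * (3 * H + 6 * C L)) = 24 * L * (6 * L ^ 2 - c₁ * L + c₂) ∧
    ν (y₁ * y₃ * (3 * H + 6 * C L)) = 12 * L * (c₁ - 6 * L) * (c₁ - L) ∧
    ν (y₄ * (3 * H + 6 * C L)) = 12 * L * (36 * L ^ 2 - 6 * L * c₁ + c₂) := by
  refine ⟨?_, ?_, ?_, ?_, ?_⟩ <;> apply ν_eq_of_eval <;>
    simp only [y₁, y₂, y₃, y₄, H, eval_add, eval_neg, eval_mul, eval_pow, eval_C,
      eval_X, eval_ofNat] <;>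
    ring

end SmoothWeierstrassChernNumbers
end
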